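/- arXiv:2003.13341 — 2 statements merged into one kernel-verified Lean document; each statement's English description precedes it below -/
import Mathlib

section
/- Let T₀ be a strongly continuous semigroup on a Banach space X, with sun dual X^⊙ and sun-star dual X^⊙*, and let j : X → X^⊙* be the canonical embedding. For an interval J, the admissible forcing class F₀(J), consisting of continuous functions f : J → X^⊙* such that the weak* integral ∫ₛᵗ T₀^⊙*(t − τ) f(τ) dτ lies in jX for all s ≤ t in J, is a closed linear subspace of C(J, X^⊙*) with the topology of uniform convergence on compact subsets. -/
/-!
For fixed `s ≤ t` in `J`, the map `f ↦ ∫ₛᵗ T₀^⊙*(t - τ) f(τ) dτ` is a continuous linear map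
`C(J, X^⊙*) → X^⊙*`: it factors through restriction to the compact interval `[s, t]`, on which
the semigroup is uniformly bounded, so the weak* integral is bounded by `C (t - s) ‖f‖` in the
sup norm. Hence `F₀(J)` is an intersection of preimages of the closed subspace `jX` under
continuous linear maps.
-/

open MeasureTheory Set Filter Topology

theorem ContinuousOn.clm_apply_apply_of_norm_le {α 𝕜 E F G : Type*} [TopologicalSpace α]
    [NontriviallyNormedField 𝕜] [SeminormedAddCommGroup E] [NormedSpace 𝕜 E]
    [SeminormedAddCommGroup F] [NormedSpace 𝕜 F] [SeminormedAddCommGroup G] [NormedSpace 𝕜 G]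
    {L : α → E →L[𝕜] F →L[𝕜] G} {s : Set α} {C : ℝ}
    (hL : ∀ v φ, ContinuousOn (fun a => L a v φ) s) (hC : ∀ a ∈ s, ‖L a‖ ≤ C)
    {u : α → E} (hu : ContinuousOn u s) (φ : F) :
    ContinuousOn (fun a => L a (u a) φ) s := by
  -- `L b (u b) = L b (u b - u a) + L b (u a)`: the uniform bound kills the first term.
  intro a ha
  have hsmall : Tendsto (fun b => L b (u b - u a) φ) (𝓝[s] a) (𝓝 0) := by
    have hu' := tendsto_iff_norm_sub_tendsto_zero.1 (hu a ha)
    refine squeeze_zero_norm' ?_ (by simpa using (hu'.const_mul C).mul_const ‖φ‖)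
    filter_upwards [self_mem_nhdsWithin] with b hb
    calc ‖L b (u b - u a) φ‖ ≤ ‖L b‖ * ‖u b - u a‖ * ‖φ‖ := (L b).le_opNorm₂ _ _
      _ ≤ C * ‖u b - u a‖ * ‖φ‖ := by gcongr; exact hC b hb
  have := hsmall.add (hL (u a) φ a ha)
  simp only [map_sub, sub_apply, sub_add_cancel, zero_add] at this
  exact this

section WeakStarIntegral

variable {E Xs : Type*} [NormedAddCommGroup E] [NormedSpace ℝ E]
  [NormedAddCommGroup Xs] [NormedSpace ℝ Xs] {s t C : ℝ} {R : ℝ → E →L[ℝ] Xs →L[ℝ] ℝ}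

theorem intervalIntegrable_apply_projIcc (hst : s ≤ t)
    (hR : ∀ v φ, ContinuousOn (fun τ => R τ v φ) (Icc s t)) (hC : ∀ τ ∈ Icc s t, ‖R τ‖ ≤ C)
    (g : C(Icc s t, E)) (φ : Xs) :
    IntervalIntegrable (fun τ => R τ (g (projIcc s t hst τ)) φ) volume s t :=
  (ContinuousOn.clm_apply_apply_of_norm_le hR hC
    (g.continuous.comp continuous_projIcc).continuousOn φ).intervalIntegrable_of_Icc hst

theorem norm_apply_projIcc_le (hst : s ≤ t) (hC : ∀ τ ∈ Icc s t, ‖R τ‖ ≤ C)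
    (g : C(Icc s t, E)) (φ : Xs) {τ : ℝ} (hτ : τ ∈ Icc s t) :
    ‖R τ (g (projIcc s t hst τ)) φ‖ ≤ C * ‖g‖ * ‖φ‖ :=
  calc ‖R τ (g (projIcc s t hst τ)) φ‖ ≤ ‖R τ‖ * ‖g (projIcc s t hst τ)‖ * ‖φ‖ :=
        (R τ).le_opNorm₂ _ _
    _ ≤ C * ‖g‖ * ‖φ‖ := by
        gcongr
        exacts [(norm_nonneg (R τ)).trans (hC τ hτ), hC τ hτ, g.norm_coe_le_norm _]

/-- The weak* integral `g ↦ ∫ₛᵗ R τ (g τ) dτ`. The integrand is only weak*-continuous, so the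
integral is taken after pairing with each `φ : Xs` rather than as a Bochner integral. -/
noncomputable def weakStarIntegralCLM (hst : s ≤ t) (R : ℝ → E →L[ℝ] Xs →L[ℝ] ℝ)
    (hR : ∀ v φ, ContinuousOn (fun τ => R τ v φ) (Icc s t)) (hC : ∀ τ ∈ Icc s t, ‖R τ‖ ≤ C) :
    C(Icc s t, E) →L[ℝ] Xs →L[ℝ] ℝ :=
  LinearMap.mkContinuous₂
    (LinearMap.mk₂ ℝ (fun g φ => ∫ τ in s..t, R τ (g (projIcc s t hst τ)) φ)
      (fun g₁ g₂ φ => by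
        simpa only [ContinuousMap.add_apply, map_add, add_apply] using
          intervalIntegral.integral_add (intervalIntegrable_apply_projIcc hst hR hC g₁ φ)
            (intervalIntegrable_apply_projIcc hst hR hC g₂ φ))
      (fun c g φ => by
        simpa only [ContinuousMap.smul_apply, map_smul, smul_apply,
          smul_eq_mul] using intervalIntegral.integral_const_mul c _)
      (fun g φ₁ φ₂ => by
        simpa only [map_add] using
          intervalIntegral.integral_add (intervalIntegrable_apply_projIcc hst hR hC g φ₁)
            (intervalIntegrable_apply_projIcc hst hR hC g φ₂))
      (fun c g φ => by
        simpa only [map_smul, smul_eq_mul] using intervalIntegral.integral_const_mul c _))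
    (C * (t - s)) fun g φ =>
      calc ‖∫ τ in s..t, R τ (g (projIcc s t hst τ)) φ‖ ≤ C * ‖g‖ * ‖φ‖ * |t - s| :=
            intervalIntegral.norm_integral_le_of_norm_le_const fun τ hτ =>
              norm_apply_projIcc_le hst hC g φ (Ioc_subset_Icc_self (uIoc_of_le hst ▸ hτ))
        _ = C * (t - s) * ‖g‖ * ‖φ‖ := by rw [abs_of_nonneg (sub_nonneg.2 hst)]; ring

theorem weakStarIntegralCLM_apply (hst : s ≤ t)
    (hR : ∀ v φ, ContinuousOn (fun τ => R τ v φ) (Icc s t)) (hC : ∀ τ ∈ Icc s t, ‖R τ‖ ≤ C)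
    (g : C(Icc s t, E)) (φ : Xs) :
    weakStarIntegralCLM hst R hR hC g φ = ∫ τ in s..t, R τ (g (projIcc s t hst τ)) φ :=
  rfl

end WeakStarIntegral

open Classical in
theorem exists_closed_submodule_mem_iff_integral_mem_range {X E Xs : Type*}
    [NormedAddCommGroup X] [NormedSpace ℝ X] [NormedAddCommGroup E] [NormedSpace ℝ E]
    [NormedAddCommGroup Xs] [NormedSpace ℝ Xs] {s t C : ℝ} {J : Set ℝ}
    (hst : s ≤ t) (hJ : Icc s t ⊆ J) {j : X →L[ℝ] Xs →L[ℝ] ℝ} (hj : IsClosed (range j))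
    {R : ℝ → E →L[ℝ] Xs →L[ℝ] ℝ} (hR : ∀ v φ, ContinuousOn (fun τ => R τ v φ) (Icc s t))
    (hC : ∀ τ ∈ Icc s t, ‖R τ‖ ≤ C) :
    ∃ F : Submodule ℝ C(J, E), IsClosed (F : Set C(J, E)) ∧ ∀ f, f ∈ F ↔
      ∃ x : X, ∀ φ : Xs, j x φ = ∫ τ in s..t, R τ (if h : τ ∈ J then f ⟨τ, h⟩ else 0) φ := by
  let Φ := (weakStarIntegralCLM hst R hR hC).comp
    (ContinuousMap.compCLM ℝ E (ContinuousMap.inclusion hJ))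
  have hΦ : ∀ f φ, Φ f φ = ∫ τ in s..t, R τ (if h : τ ∈ J then f ⟨τ, h⟩ else 0) φ := by
    intro f φ
    rw [ContinuousLinearMap.comp_apply, weakStarIntegralCLM_apply]
    refine intervalIntegral.integral_congr fun τ hτ => ?_
    rw [uIcc_of_le hst] at hτ
    rw [ContinuousMap.compCLM_apply, ContinuousMap.comp_apply, projIcc_of_mem hst hτ,
      dif_pos (hJ hτ)]
    rfl
  refine ⟨(LinearMap.range (j : X →ₗ[ℝ] Xs →L[ℝ] ℝ)).comap (Φ : C(J, E) →ₗ[ℝ] Xs →L[ℝ] ℝ),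
    hj.preimage Φ.continuous, fun f => ?_⟩
  simp [ContinuousLinearMap.ext_iff, hΦ]

open Classical in
theorem admissible_forcing_class_closed_subspace_general
    {X Xs : Type*} [NormedAddCommGroup X] [NormedSpace ℝ X]
    [NormedAddCommGroup Xs] [NormedSpace ℝ Xs]
    (j : X →L[ℝ] (Xs →L[ℝ] ℝ))
    (hjcl : IsClosed (Set.range j))
    (Tss : ℝ → (Xs →L[ℝ] ℝ) →L[ℝ] (Xs →L[ℝ] ℝ))
    (M ω : ℝ) (hbound : ∀ t : ℝ, 0 ≤ t → ‖Tss t‖ ≤ M * Real.exp (ω * t))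
    (hwscont : ∀ (v : Xs →L[ℝ] ℝ) (φ : Xs),
      ContinuousOn (fun t => (Tss t v) φ) (Set.Ici (0:ℝ)))
    (J : Set ℝ) (hJ : J.OrdConnected) :
    ∀ F0 : Set C(↥J, Xs →L[ℝ] ℝ),
      F0 = {f : C(↥J, Xs →L[ℝ] ℝ) |
        ∀ s ∈ J, ∀ t ∈ J, s ≤ t → ∃ x : X, ∀ φ : Xs,
          (j x) φ =
            ∫ τ in s..t,
              (Tss (t - τ) (if h : τ ∈ J then f ⟨τ, h⟩ else 0)) φ} →
      IsClosed F0 ∧ (0 : C(↥J, Xs →L[ℝ] ℝ)) ∈ F0 ∧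
        (∀ f g : C(↥J, Xs →L[ℝ] ℝ), f ∈ F0 → g ∈ F0 → f + g ∈ F0) ∧
        (∀ (c : ℝ) (f : C(↥J, Xs →L[ℝ] ℝ)), f ∈ F0 → c • f ∈ F0) := by
  intro F0 hF0
  have hbdd : ∀ s t : ℝ, ∃ C, ∀ τ ∈ Icc s t, ‖Tss (t - τ)‖ ≤ C := fun s t => by
    obtain ⟨C, hC⟩ := isCompact_Icc.exists_bound_of_continuousOn
      (f := fun τ => M * Real.exp (ω * (t - τ))) (by fun_prop)
    exact ⟨C, fun τ hτ => (hbound _ (sub_nonneg.2 hτ.2)).trans ((le_abs_self _).trans (hC τ hτ))⟩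
  choose C hC using hbdd
  have hF := fun s (hs : s ∈ J) t (ht : t ∈ J) (hst : s ≤ t) =>
    exists_closed_submodule_mem_iff_integral_mem_range hst (hJ.out hs ht) hjcl
      (fun v φ => (hwscont v φ).comp (by fun_prop) fun τ hτ => sub_nonneg.2 hτ.2) (hC s t)
  choose F hFclosed hFmem using hF
  let F₀ : Submodule ℝ C(J, Xs →L[ℝ] ℝ) := ⨅ s, ⨅ hs, ⨅ t, ⨅ ht, ⨅ hst, F s hs t ht hst
  have hF₀ : F0 = F₀ := by
    ext f
    simp [hF0, F₀, hFmem]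
  subst hF₀
  refine ⟨?_, F₀.zero_mem, fun _ _ => F₀.add_mem, fun c _ => F₀.smul_mem c⟩
  simp only [F₀, Submodule.coe_iInf]
  exact isClosed_iInter fun s => isClosed_iInter fun hs => isClosed_iInter fun t =>
    isClosed_iInter fun ht => isClosed_iInter fun hst => hFclosed s hs t ht hst

open MeasureTheory Classical in
/-- In the sun-star duality setting (`X^⊙*` realized as the dual of the
Banach space `Xs = X^⊙`, with the canonical embedding `j : X → X^⊙*` having closed range,
and `Tss = T₀^⊙*` the sun-star adjoint semigroup), the admissible forcing class `F₀(J)`,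
consisting of continuous `f : J → X^⊙*` such that the weak* integral
`∫ₛᵗ T₀^⊙*(t-τ) f(τ) dτ` lies in `jX` for all `s ≤ t` in `J`, is a closed linear
subspace of `C(J, X^⊙*)` (with the compact-open topology, i.e. uniform convergence on
compact subsets). -/
theorem admissible_forcing_class_closed_subspace
    {X Xs : Type*} [NormedAddCommGroup X] [NormedSpace ℝ X] [CompleteSpace X]
    [NormedAddCommGroup Xs] [NormedSpace ℝ Xs] [CompleteSpace Xs]
    (j : X →L[ℝ] (Xs →L[ℝ] ℝ)) (hjinj : Function.Injective j)
    (hjcl : IsClosed (Set.range j))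
    (Tss : ℝ → (Xs →L[ℝ] ℝ) →L[ℝ] (Xs →L[ℝ] ℝ))
    (hT0 : Tss 0 = 1)
    (hTsg : ∀ s t : ℝ, 0 ≤ s → 0 ≤ t → Tss (s + t) = (Tss s).comp (Tss t))
    (M ω : ℝ) (hbound : ∀ t : ℝ, 0 ≤ t → ‖Tss t‖ ≤ M * Real.exp (ω * t))
    (hwscont : ∀ (v : Xs →L[ℝ] ℝ) (φ : Xs),
      ContinuousOn (fun t => (Tss t v) φ) (Set.Ici (0:ℝ)))
    (J : Set ℝ) (hJ : J.OrdConnected) :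
    ∀ F0 : Set C(↥J, Xs →L[ℝ] ℝ),
      F0 = {f : C(↥J, Xs →L[ℝ] ℝ) |
        ∀ s ∈ J, ∀ t ∈ J, s ≤ t → ∃ x : X, ∀ φ : Xs,
          (j x) φ =
            ∫ τ in s..t,
              (Tss (t - τ) (if h : τ ∈ J then f ⟨τ, h⟩ else 0)) φ} →
      IsClosed F0 ∧ (0 : C(↥J, Xs →L[ℝ] ℝ)) ∈ F0 ∧
        (∀ f g : C(↥J, Xs →L[ℝ] ℝ), f ∈ F0 → g ∈ F0 → f + g ∈ F0) ∧
        (∀ (c : ℝ) (f : C(↥J, Xs →L[ℝ] ℝ)), f ∈ F0 → c • f ∈ F0) :=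
  admissible_forcing_class_closed_subspace_general j hjcl Tss M ω hbound hwscont J hJ
end

section
/- The range jX of the canonical embedding is an admissible range for T₀: for every continuous function f : ℝ → jX and all s ≤ t, the weak* Riemann integral ∫ₛᵗ T₀^⊙*(t − τ) f(τ) dτ belongs to jX. -/
open Set

/-! Since `jX` is closed, the open mapping theorem makes `j` a homeomorphism onto it, so `f` lifts
to a continuous `g : ℝ → X`. By Banach–Steinhaus the strongly continuous `T₀` is uniformly bounded
on compacts, hence `τ ↦ T₀(t - τ) g(τ)` is continuous on `[s, t]`; its Bochner integral in `X`
is mapped by `j` to the weak* integral, because `j` intertwines `T₀` and `T₀^⊙*`. -/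

section

variable {𝕜 E F : Type*} [NontriviallyNormedField 𝕜]
  [NormedAddCommGroup E] [NormedSpace 𝕜 E] [CompleteSpace E]
  [NormedAddCommGroup F] [NormedSpace 𝕜 F]

theorem ContinuousLinearMap.exists_continuous_lift_of_isClosed_range [CompleteSpace F]
    {α : Type*} [TopologicalSpace α] {j : E →L[𝕜] F} (hinj : Function.Injective j)
    (hclo : IsClosed (range j)) {f : α → F} (hf : Continuous f) (hfr : ∀ a, f a ∈ range j) :
    ∃ g : α → E, Continuous g ∧ ∀ a, j (g a) = f a := by
  let e := j.equivRange hinj hclo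
  refine ⟨fun a => e.symm ⟨f a, hfr a⟩, e.symm.continuous.comp (hf.subtype_mk _), fun a => ?_⟩
  exact congrArg Subtype.val (e.apply_symm_apply ⟨f a, hfr a⟩)

theorem IsCompact.continuousOn_clm_apply_of_pointwise {α : Type*} [TopologicalSpace α]
    {K : Set α} (hK : IsCompact K) {T : α → E →L[𝕜] F}
    (hT : ∀ x, ContinuousOn (fun a => T a x) K) {g : α → E} (hg : ContinuousOn g K) :
    ContinuousOn (fun a => T a (g a)) K := by
  obtain ⟨C, hC⟩ : ∃ C, ∀ a : K, ‖T a‖ ≤ C :=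
    banach_steinhaus fun x =>
      let ⟨C, hC⟩ := hK.exists_bound_of_continuousOn (hT x)
      ⟨C, fun a => hC a a.2⟩
  intro a₀ ha₀
  have hsmall : Filter.Tendsto (fun a => T a (g a - g a₀)) (nhdsWithin a₀ K) (nhds 0) := by
    refine squeeze_zero_norm' ?_ (by simpa using ((hg a₀ ha₀).sub_const (g a₀)).norm.const_mul C)
    filter_upwards [self_mem_nhdsWithin] with a ha
    exact (T a).le_of_opNorm_le (hC ⟨a, ha⟩) _
  simpa [ContinuousWithinAt] using hsmall.add (hT (g a₀) a₀ ha₀)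

end

theorem jX_is_admissible_range_general
    {X Xs : Type*} [NormedAddCommGroup X] [NormedSpace ℝ X] [CompleteSpace X]
    [NormedAddCommGroup Xs] [NormedSpace ℝ Xs]
    (j : X →L[ℝ] (Xs →L[ℝ] ℝ)) (hjinj : Function.Injective j)
    (hjcl : IsClosed (Set.range j))
    (T0 : ℝ → X →L[ℝ] X)
    (Tss : ℝ → (Xs →L[ℝ] ℝ) →L[ℝ] (Xs →L[ℝ] ℝ))
    (hT0cont : ∀ x : X, ContinuousOn (fun t => T0 t x) (Set.Ici (0:ℝ)))
    (hintertwine : ∀ t : ℝ, 0 ≤ t → ∀ x : X, Tss t (j x) = j (T0 t x))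
    (f : ℝ → (Xs →L[ℝ] ℝ)) (hfc : Continuous f) (hfr : ∀ τ : ℝ, f τ ∈ Set.range j) :
    ∀ s t : ℝ, s ≤ t → ∃ x : X, ∀ φ : Xs,
      (j x) φ = ∫ τ in s..t, (Tss (t - τ) (f τ)) φ := by
  intro s t hst
  obtain ⟨g, hgc, hjg⟩ := j.exists_continuous_lift_of_isClosed_range hjinj hjcl hfc hfr
  have hnonneg : MapsTo (t - ·) (Icc s t) (Ici 0) := fun τ hτ => sub_nonneg.2 hτ.2
  have hcont : ContinuousOn (fun τ => T0 (t - τ) (g τ)) (Icc s t) :=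
    isCompact_Icc.continuousOn_clm_apply_of_pointwise
      (fun x => (hT0cont x).comp (by fun_prop) hnonneg) hgc.continuousOn
  refine ⟨∫ τ in s..t, T0 (t - τ) (g τ), fun φ => ?_⟩
  refine (((ContinuousLinearMap.apply ℝ ℝ φ).comp j).intervalIntegral_comp_comm
    (hcont.intervalIntegrable_of_Icc hst)).symm.trans
    (intervalIntegral.integral_congr fun τ hτ => ?_)
  rw [uIcc_of_le hst] at hτ
  simp [← hjg τ, hintertwine _ (hnonneg hτ)]

/-- `jX` is an admissible range for `T₀`: in the sun-star duality setting
(with `X^⊙*` realized as the dual of `Xs = X^⊙`, `j : X → X^⊙*` the canonical embedding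
with closed range satisfying `T₀^⊙*(t) ∘ j = j ∘ T₀(t)` for `t ≥ 0`), for every
continuous `f : ℝ → X^⊙*` taking values in `jX` and all `s ≤ t`, the weak* Riemann
integral `∫ₛᵗ T₀^⊙*(t-τ) f(τ) dτ` belongs to `jX`. -/
theorem jX_is_admissible_range
    {X Xs : Type*} [NormedAddCommGroup X] [NormedSpace ℝ X] [CompleteSpace X]
    [NormedAddCommGroup Xs] [NormedSpace ℝ Xs] [CompleteSpace Xs]
    (j : X →L[ℝ] (Xs →L[ℝ] ℝ)) (hjinj : Function.Injective j)
    (hjcl : IsClosed (Set.range j))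
    (T0 : ℝ → X →L[ℝ] X)
    (Tss : ℝ → (Xs →L[ℝ] ℝ) →L[ℝ] (Xs →L[ℝ] ℝ))
    (hT00 : T0 0 = 1)
    (hT0sg : ∀ s t : ℝ, 0 ≤ s → 0 ≤ t → T0 (s + t) = (T0 s).comp (T0 t))
    (hT0cont : ∀ x : X, ContinuousOn (fun t => T0 t x) (Set.Ici (0:ℝ)))
    (hintertwine : ∀ t : ℝ, 0 ≤ t → ∀ x : X, Tss t (j x) = j (T0 t x))
    (f : ℝ → (Xs →L[ℝ] ℝ)) (hfc : Continuous f) (hfr : ∀ τ : ℝ, f τ ∈ Set.range j) :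
    ∀ s t : ℝ, s ≤ t → ∃ x : X, ∀ φ : Xs,
      (j x) φ = ∫ τ in s..t, (Tss (t - τ) (f τ)) φ :=
  jX_is_admissible_range_general j hjinj hjcl T0 Tss hT0cont hintertwine f hfc hfr
end
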